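/- Let τ ∈ ℂ with Im τ > 0, −1/2 < Re τ ≤ 1/2 and |τ| ≥ 1, let Γ_τ = {m + n·τ : m, n ∈ ℤ}, and let I : ℂ → ℂ be a fixpoint-free lift of an antiholomorphic involution of the torus ℂ/Γ_τ. Then Γ_τ is a rectangular lattice, i.e. Re τ = 0, and there exists δ ∈ ℂ such that either I(z + δ) − δ − (conj(z) + 1/2) ∈ Γ_τ for all z ∈ ℂ, or I(z + δ) − δ − (−conj(z) + τ/2) ∈ Γ_τ for all z ∈ ℂ. -/

import Mathlib

/-!
Write `I z = g (conj z)` with `g` entire. For `ω ∈ Γ_τ` the difference `g (w + conj ω) - g w`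
is a continuous function with values in the discrete set `Γ_τ`, hence constant, so `g'` is
periodic for the lattice `conj Γ_τ` and constant by Liouville: `I z = c * conj z + b`.

Put `R z = c * conj z`. Periodicity gives `R Γ_τ ⊆ Γ_τ`, the involution condition gives
`|c| = 1` and `d = R b + b ∈ Γ_τ` with `R d = d`, and `I` has a fixed point modulo `Γ_τ` as soon as
`d = R γ + γ` for some `γ ∈ Γ_τ` (take `z = (b - γ) / 2`). This always happens when `Γ_τ` has a
`ℤ`-basis of the form `{u, R u}`. For reduced `τ` this excludes every `c` except `±1`, and then
forces `Re τ = 0`. On the rectangular lattice `d` is an odd multiple of the `R`-fixed basis vector,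
and the translation `δ = (b - R b) / 4` brings `I` to one of the two normal forms.
-/

open Complex ComplexConjugate Submodule

def lattice (τ : ℂ) : Submodule ℤ ℂ := span ℤ {1, τ}

theorem mem_lattice {τ z : ℂ} : z ∈ lattice τ ↔ ∃ m n : ℤ, z = m + n * τ := by
  simp only [lattice, mem_span_pair, zsmul_eq_mul, mul_one, eq_comm]

theorem one_mem_lattice (τ : ℂ) : (1 : ℂ) ∈ lattice τ := subset_span (by simp)

theorem mem_lattice_self (τ : ℂ) : τ ∈ lattice τ := subset_span (by simp)

theorem mem_lattice_conj {τ z : ℂ} : z ∈ lattice (conj τ) ↔ conj z ∈ lattice τ := by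
  simp only [mem_lattice]
  refine exists₂_congr fun m n => ⟨fun h => ?_, fun h => ?_⟩
  · simp [h]
  · simpa using congrArg conj h

/-- Its lattice is `lattice τ` by definition, which gives access to the `ZLattice` API. -/
def PeriodPair.ofOneAnd (τ : ℂ) (hτ : τ.im ≠ 0) : PeriodPair where
  ω₁ := 1
  ω₂ := τ
  indep := LinearIndependent.pair_iff.mpr fun s t h => by
    have him : t * τ.im = 0 := by simpa using congrArg im h
    obtain rfl : t = 0 := (mul_eq_zero.mp him).resolve_right hτ
    simpa using h

theorem half_notMem_lattice {τ : ℂ} (hτ : τ.im ≠ 0) : (1 / 2 : ℂ) ∉ lattice τ :=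
  (PeriodPair.ofOneAnd τ hτ).ω₁_div_two_notMem_lattice

theorem eq_zero_of_forall_mul_add_mem_lattice {τ a e : ℂ} (hτ : τ.im ≠ 0)
    (h : ∀ z, a * z + e ∈ lattice τ) : a = 0 := by
  by_contra ha
  refine half_notMem_lattice hτ ?_
  simpa [mul_div_cancel₀ _ ha] using h ((1 / 2 - e) / a)

theorem deriv_add_eq_of_add_sub_mem {g : ℂ → ℂ} (hg : Differentiable ℂ g)
    {S : Set ℂ} (hS : IsDiscrete S) {ω : ℂ} (h : ∀ z, g (z + ω) - g z ∈ S) (z : ℂ) :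
    deriv g (z + ω) = deriv g z := by
  have hconst : ∀ w, g (w + ω) - g w = g ω - g 0 := fun w => by
    simpa using isPreconnected_univ.constant_of_mapsTo hS
      ((hg.comp (differentiable_id.add_const ω)).sub hg).continuous.continuousOn
      (fun w _ => h w) (Set.mem_univ w) (Set.mem_univ 0)
  have hshift : (fun w => g (w + ω)) = fun w => g w + (g ω - g 0) := by
    funext w; rw [← hconst w]; ring
  rw [← deriv_comp_add_const, hshift, deriv_add_const]

theorem eq_mul_add_of_deriv_eq {g : ℂ → ℂ} (hg : Differentiable ℂ g) {a : ℂ}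
    (h : ∀ z, deriv g z = a) (z : ℂ) : g z = a * z + g 0 := by
  have hlin : Differentiable ℂ fun w => g w - a * w := hg.sub (differentiable_id.const_mul a)
  have := is_const_of_deriv_eq_zero hlin (fun w => by
    simpa [h w] using ((hg w).hasDerivAt.fun_sub ((hasDerivAt_id w).const_mul a)).deriv) z 0
  simp only [mul_zero, sub_zero] at this
  linear_combination this

theorem exists_eq_mul_add_of_add_sub_mem {Λ : Submodule ℤ ℂ} [DiscreteTopology Λ]
    [IsZLattice ℝ Λ] {S : Set ℂ} (hS : IsDiscrete S) {g : ℂ → ℂ} (hg : Differentiable ℂ g)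
    (h : ∀ z, ∀ ω ∈ Λ, g (z + ω) - g z ∈ S) : ∃ a b, ∀ z, g z = a * z + b := by
  have hg' : Differentiable ℂ (deriv g) := fun z => (hg.analyticAt z).deriv.differentiableAt
  have hbdd := (IsZLattice.isCompact_range_of_periodic Λ _ hg'.continuous
    fun z ω hω => deriv_add_eq_of_add_sub_mem hg hS (fun w => h w ω hω) z).isBounded
  exact ⟨_, _, eq_mul_add_of_deriv_eq hg fun z => hg'.apply_eq_apply_of_bounded hbdd z 0⟩

theorem exists_eq_mul_conj_add {τ : ℂ} (hτ : τ.im ≠ 0) {I : ℂ → ℂ}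
    (hI : Differentiable ℂ fun z => I (conj z))
    (hper : ∀ z, ∀ ω ∈ lattice τ, I (z + ω) - I z ∈ lattice τ) :
    ∃ c b, ∀ z, I z = c * conj z + b := by
  have hτ' : (conj τ).im ≠ 0 := by simpa using hτ
  have : DiscreteTopology (lattice (conj τ)) :=
    inferInstanceAs (DiscreteTopology (PeriodPair.ofOneAnd _ hτ').lattice)
  have : IsZLattice ℝ (lattice (conj τ)) :=
    inferInstanceAs (IsZLattice ℝ (PeriodPair.ofOneAnd _ hτ').lattice)
  have hS : IsDiscrete (lattice τ : Set ℂ) := isDiscrete_iff_discreteTopology.mpr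
    (inferInstanceAs (DiscreteTopology (PeriodPair.ofOneAnd _ hτ).lattice))
  obtain ⟨c, b, h⟩ := exists_eq_mul_add_of_add_sub_mem (Λ := lattice (conj τ)) hS hI
    fun z ω hω => by simpa using hper (conj z) (conj ω) (mem_lattice_conj.mp hω)
  exact ⟨c, b, fun z => by simpa using h (conj z)⟩

theorem mul_conj_mul_conj_add_self {c : ℂ} (hcc : c * conj c = 1) (b : ℂ) :
    c * conj (c * conj b + b) = c * conj b + b := by
  simp only [map_add, map_mul, conj_conj]
  linear_combination b * hcc

theorem mul_conj_add_sub_eq {c : ℂ} (hcc : c * conj c = 1) (b z : ℂ) :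
    c * conj (z + (b - c * conj b) / 4) + b - (b - c * conj b) / 4
      = c * conj z + (c * conj b + b) / 2 := by
  simp only [map_add, map_div₀, map_sub, map_mul, conj_conj, map_ofNat]
  linear_combination (-b / 4) * hcc

theorem exists_eq_mul_conj_add_self_of_mem_span {c u d : ℂ} (hcc : c * conj c = 1)
    (hu : c * conj u ≠ u) (hd : d ∈ span ℤ {u, c * conj u}) (hRd : c * conj d = d) :
    ∃ p : ℤ, d = c * conj (p * u) + p * u := by
  obtain ⟨p, q, rfl⟩ := mem_span_pair.mp hd
  simp only [zsmul_eq_mul, map_add, map_mul, map_intCast, conj_conj] at hRd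
  have hpq : ((p - q : ℤ) : ℂ) * (c * conj u - u) = 0 := by
    push_cast; linear_combination hRd - (q : ℂ) * u * hcc
  obtain rfl : p = q := by simpa [sub_eq_zero, hu] using hpq
  refine ⟨p, ?_⟩
  simp only [zsmul_eq_mul, map_mul, map_intCast]
  ring

theorem exists_eq_intCast_mul_of_mem_span {c v w d : ℂ} (hv : c * conj v = v)
    (hw : c * conj w = -w) (hw0 : w ≠ 0) (hd : d ∈ span ℤ {v, w}) (hRd : c * conj d = d) :
    ∃ p : ℤ, d = p * v := by
  obtain ⟨p, q, rfl⟩ := mem_span_pair.mp hd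
  simp only [zsmul_eq_mul, map_add, map_mul, map_intCast] at hRd
  have hq : (2 * q : ℂ) * w = 0 := by linear_combination (p : ℂ) * hv + (q : ℂ) * hw - hRd
  obtain rfl : q = 0 := by simpa [hw0] using hq
  exact ⟨p, by simp⟩

theorem half_lt_im {τ : ℂ} (hτ : 0 < τ.im) (hre : |τ.re| ≤ 1 / 2) (habs : 1 ≤ ‖τ‖) :
    1 / 2 < τ.im := by
  have hnorm : 1 ≤ τ.re ^ 2 + τ.im ^ 2 := by
    have : 1 ≤ ‖τ‖ ^ 2 := by nlinarith
    rw [Complex.sq_norm, normSq_apply] at this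
    nlinarith
  nlinarith [sq_abs τ.re, abs_nonneg τ.re]

theorem eq_one_or_eq_neg_one_or_lattice_le_span {τ c : ℂ} (hτ : 1 / 2 < τ.im)
    (hc : c ∈ lattice τ) (hcc : c * conj c = 1) :
    c = 1 ∨ c = -1 ∨ lattice τ ≤ span ℤ {1, c} := by
  obtain ⟨m, n, rfl⟩ := mem_lattice.mp hc
  have hnorm : ((m : ℝ) + n * τ.re) ^ 2 + (n * τ.im) ^ 2 = 1 := by
    have := congrArg re hcc
    simp only [mul_re, conj_re, conj_im, add_re, add_im, mul_im, intCast_re, intCast_im,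
      one_re] at this
    linear_combination this
  have hn : n = 0 ∨ n = 1 ∨ n = -1 := by
    have : (n : ℝ) ^ 2 < 4 := by
      by_contra! h
      nlinarith [mul_le_mul_of_nonneg_right h (sq_nonneg τ.im), sq_nonneg ((m : ℝ) + n * τ.re)]
    have : n ^ 2 < 4 := by exact_mod_cast this
    have : -2 < n ∧ n < 2 := ⟨by nlinarith, by nlinarith⟩
    omega
  rcases hn with rfl | hn
  · have hm : (m : ℂ) * m = 1 := by simpa using hcc
    rcases mul_self_eq_one_iff.mp hm with h | h
    · exact Or.inl (by simpa using h)
    · exact Or.inr (Or.inl (by simpa using h))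
  · refine Or.inr (Or.inr (span_le.mpr ?_))
    rintro _ (rfl | rfl)
    · exact subset_span (by simp)
    · refine mem_span_pair.mpr ⟨-(n * m), n, ?_⟩
      rcases hn with rfl | rfl <;> simp

theorem re_eq_zero_or_eq_half_of_conj_mem_lattice {τ : ℂ} (hτ : τ.im ≠ 0)
    (hre : -(1 / 2) < τ.re ∧ τ.re ≤ 1 / 2) (h : conj τ ∈ lattice τ) :
    τ.re = 0 ∨ τ.re = 1 / 2 := by
  obtain ⟨m, n, hmn⟩ := mem_lattice.mp h
  have him : ((n : ℝ) + 1) * τ.im = 0 := by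
    have := congrArg im hmn
    simp only [conj_im, add_im, intCast_im, mul_im, intCast_re, zero_mul, add_zero,
      zero_add] at this
    linear_combination -this
  obtain rfl : n = -1 := by
    have : (n : ℝ) = -1 := by simpa [hτ, add_eq_zero_iff_eq_neg] using him
    exact_mod_cast this
  have hm : (m : ℝ) = 2 * τ.re := by
    have := congrArg re hmn
    simp only [conj_re, add_re, intCast_re, mul_re, intCast_im, zero_mul, sub_zero] at this
    push_cast at this
    linear_combination -this
  have : -1 < m ∧ m ≤ 1 := by
    constructor
    · exact_mod_cast (show (-1 : ℝ) < m by linarith)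
    · exact_mod_cast (show (m : ℝ) ≤ 1 by linarith)
  obtain rfl | rfl : m = 0 ∨ m = 1 := by omega
  · left; simpa using hm.symm
  · right; push_cast at hm; linarith

theorem exists_mem_lattice_mul_conj_add_eq {τ c u d : ℂ} (hcc : c * conj c = 1)
    (hu : u ∈ lattice τ) (hRu : c * conj u ≠ u) (hspan : lattice τ ≤ span ℤ {u, c * conj u})
    (hd : d ∈ lattice τ) (hRd : c * conj d = d) :
    ∃ γ ∈ lattice τ, c * conj γ + γ = d := by
  obtain ⟨p, hp⟩ := exists_eq_mul_conj_add_self_of_mem_span hcc hRu (hspan hd) hRd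
  exact ⟨p * u, by simpa [← zsmul_eq_mul] using zsmul_mem hu p, hp.symm⟩

theorem eq_one_or_eq_neg_one_of_forall_mul_conj_add_ne {τ c d : ℂ} (hτ : 1 / 2 < τ.im)
    (hcc : c * conj c = 1) (hc : c ∈ lattice τ) (hd : d ∈ lattice τ) (hRd : c * conj d = d)
    (hfree : ∀ γ ∈ lattice τ, c * conj γ + γ ≠ d) :
    c = 1 ∨ c = -1 := by
  by_contra! hc1
  obtain h | h | hspan := eq_one_or_eq_neg_one_or_lattice_le_span hτ hc hcc
  · exact hc1.1 h
  · exact hc1.2 h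
  obtain ⟨γ, hγ, h⟩ := exists_mem_lattice_mul_conj_add_eq hcc (one_mem_lattice τ)
    (by simpa using hc1.1) (by simpa using hspan) hd hRd
  exact hfree γ hγ h

theorem re_eq_zero_of_forall_mul_conj_add_ne {τ c d : ℂ} (hτ : τ.im ≠ 0)
    (hre : -(1 / 2) < τ.re ∧ τ.re ≤ 1 / 2) (hc : c = 1 ∨ c = -1)
    (hcτ : c * conj τ ∈ lattice τ) (hd : d ∈ lattice τ) (hRd : c * conj d = d)
    (hfree : ∀ γ ∈ lattice τ, c * conj γ + γ ≠ d) :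
    τ.re = 0 := by
  have hconj : conj τ ∈ lattice τ := by
    rcases hc with rfl | rfl
    · simpa using hcτ
    · simpa using neg_mem hcτ
  refine (re_eq_zero_or_eq_half_of_conj_mem_lattice hτ hre hconj).resolve_right fun hhalf => ?_
  have hconjτ : conj τ = 1 - τ :=
    Complex.ext (by simp only [conj_re, hhalf, sub_re, one_re]; norm_num) (by simp)
  have hcc : c * conj c = 1 := by rcases hc with rfl | rfl <;> simp
  have hRτ : c * conj τ ≠ τ := by
    intro h
    rcases hc with rfl | rfl
    · exact hτ (by simpa [conj_eq_iff_im] using h)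
    · have := congrArg re h
      norm_num [hhalf] at this
  have hspan : lattice τ ≤ span ℤ {τ, c * conj τ} := by
    refine span_le.mpr ?_
    rintro _ (rfl | rfl)
    · rcases hc with rfl | rfl
      · exact mem_span_pair.mpr ⟨1, 1, by simp [hconjτ]⟩
      · exact mem_span_pair.mpr ⟨1, -1, by simp [hconjτ]⟩
    · exact subset_span (by simp)
  obtain ⟨γ, hγ, h⟩ :=
    exists_mem_lattice_mul_conj_add_eq hcc (mem_lattice_self τ) hRτ hspan hd hRd
  exact hfree γ hγ h

theorem exists_translate_of_forall_mul_conj_add_ne {τ c b v w : ℂ} (hcc : c * conj c = 1)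
    (hv : v ∈ lattice τ) (hRv : c * conj v = v) (hRw : c * conj w = -w) (hw0 : w ≠ 0)
    (hspan : lattice τ ≤ span ℤ {v, w}) (hd : c * conj b + b ∈ lattice τ)
    (hfree : ∀ γ ∈ lattice τ, c * conj γ + γ ≠ c * conj b + b) :
    ∃ δ, ∀ z, c * conj (z + δ) + b - δ - (c * conj z + v / 2) ∈ lattice τ := by
  obtain ⟨p, hp⟩ := exists_eq_intCast_mul_of_mem_span hRv hRw hw0 (hspan hd)
    (mul_conj_mul_conj_add_self hcc b)
  have hkv : ∀ k : ℤ, (k : ℂ) * v ∈ lattice τ := fun k => by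
    simpa [← zsmul_eq_mul] using zsmul_mem hv k
  obtain ⟨k, rfl⟩ | ⟨k, rfl⟩ := p.even_or_odd
  · refine absurd ?_ (hfree _ (hkv k))
    simp only [hp, map_mul, map_intCast, Int.cast_add]
    linear_combination (k : ℂ) * hRv
  · refine ⟨(b - c * conj b) / 4, fun z => ?_⟩
    rw [mul_conj_add_sub_eq hcc, hp]
    convert hkv k using 1
    push_cast
    ring

theorem exists_translate_of_re_eq_zero {τ c b : ℂ} (hτ : τ.im ≠ 0) (hre : τ.re = 0)
    (hc : c = 1 ∨ c = -1) (hd : c * conj b + b ∈ lattice τ)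
    (hfree : ∀ γ ∈ lattice τ, c * conj γ + γ ≠ c * conj b + b) :
    ∃ δ, (∀ z, c * conj (z + δ) + b - δ - (conj z + 1 / 2) ∈ lattice τ) ∨
      (∀ z, c * conj (z + δ) + b - δ - (-conj z + τ / 2) ∈ lattice τ) := by
  have hconjτ : conj τ = -τ := Complex.ext (by simp [hre]) (by simp)
  have hτ0 : τ ≠ 0 := fun h => hτ (by simp [h])
  rcases hc with rfl | rfl
  · obtain ⟨δ, hδ⟩ := exists_translate_of_forall_mul_conj_add_ne (by simp) (one_mem_lattice τ)
      (by simp) (by simp [hconjτ]) hτ0 le_rfl hd hfree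
    exact ⟨δ, Or.inl fun z => by simpa using hδ z⟩
  · obtain ⟨δ, hδ⟩ := exists_translate_of_forall_mul_conj_add_ne (v := τ) (w := 1) (by simp)
      (mem_lattice_self τ) (by simp [hconjτ]) (by simp) one_ne_zero
      (by rw [Set.pair_comm]; exact le_rfl) hd hfree
    exact ⟨δ, Or.inr fun z => by simpa using hδ z⟩

theorem stmt_9 (τ : ℂ) (hτ : 0 < τ.im)
    (hre : -(1/2) < τ.re ∧ τ.re ≤ 1/2) (habs : 1 ≤ ‖τ‖)
    (Γ : Set ℂ) (hΓ : Γ = {z : ℂ | ∃ m n : ℤ, z = m + n * τ})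
    (I : ℂ → ℂ)
    (hent : Differentiable ℂ (fun z => I (starRingEnd ℂ z)))
    (hper : ∀ z : ℂ, ∀ ω ∈ Γ, I (z + ω) - I z ∈ Γ)
    (hinv : ∀ z : ℂ, I (I z) - z ∈ Γ)
    (hfree : ∀ z : ℂ, I z - z ∉ Γ) :
    τ.re = 0 ∧
    ∃ δ : ℂ, (∀ z : ℂ, I (z + δ) - δ - (starRingEnd ℂ z + 1/2) ∈ Γ) ∨
      (∀ z : ℂ, I (z + δ) - δ - (-starRingEnd ℂ z + τ/2) ∈ Γ) := by
  obtain rfl : Γ = lattice τ := hΓ.trans (Set.ext fun _ => mem_lattice.symm)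
  obtain ⟨c, b, hI⟩ := exists_eq_mul_conj_add hτ.ne' hent hper
  simp only [hI, SetLike.mem_coe] at hper hinv hfree ⊢
  have hcc : c * conj c = 1 := sub_eq_zero.mp <| eq_zero_of_forall_mul_add_mem_lattice
    (e := c * conj b + b) hτ.ne' fun z => by
      convert hinv z using 2
      simp only [map_add, map_mul, conj_conj]
      ring
  have hd : c * conj b + b ∈ lattice τ := by simpa using hinv 0
  have hRd := mul_conj_mul_conj_add_self hcc b
  have hfree' : ∀ γ ∈ lattice τ, c * conj γ + γ ≠ c * conj b + b := fun γ hγ h =>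
    hfree ((b - γ) / 2) (by
      convert hγ using 2
      simp only [map_div₀, map_sub, map_ofNat]
      linear_combination -h / 2)
  have hc : c = 1 ∨ c = -1 := eq_one_or_eq_neg_one_of_forall_mul_conj_add_ne
    (half_lt_im hτ (abs_le.mpr ⟨hre.1.le, hre.2⟩) habs) hcc
    (by simpa using hper 0 1 (one_mem_lattice τ)) hd hRd hfree'
  have hre0 : τ.re = 0 := re_eq_zero_of_forall_mul_conj_add_ne hτ.ne' hre hc
    (by simpa using hper 0 τ (mem_lattice_self τ)) hd hRd hfree'
  exact ⟨hre0, exists_translate_of_re_eq_zero hτ.ne' hre0 hc hd hfree'⟩
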